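/- arXiv:math/0509418 — 2 statements merged into one kernel-verified Lean document; each statement's English description precedes it below -/
import Mathlib

section
/- Let 0 → A → B → C → 0 be a short exact sequence of finitely generated abelian groups equipped with compatible endomorphisms φ, and q a prime. If φ acts as multiplication by λ on A ⊗ ℤ/q and by μ on C ⊗ ℤ/q with λ ≢ μ (mod q), then the q-torsion of B is isomorphic to the direct sum of the q-torsion of A and the q-torsion of C. -/
/-- The `q`-primary torsion subgroup of an abelian group: elements killed by a power of `q`. -/
def qPrimaryTorsion (q : ℕ) (A : Type*) [AddCommGroup A] : AddSubgroup A where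
  carrier := {a | ∃ k : ℕ, q ^ k • a = 0}
  zero_mem' := ⟨0, smul_zero _⟩
  add_mem' := by
    rintro a b ⟨k, hk⟩ ⟨l, hl⟩
    have ha : q ^ (k + l) • a = 0 := by rw [pow_add, mul_comm, mul_smul, hk, smul_zero]
    have hb : q ^ (k + l) • b = 0 := by rw [pow_add, mul_smul, hl, smul_zero]
    exact ⟨k + l, by rw [smul_add, ha, hb, add_zero]⟩
  neg_mem' := by rintro a ⟨k, hk⟩; exact ⟨k, by rw [smul_neg, hk, neg_zero]⟩

/-! Write `T(X)` for the `q`-primary torsion; it is killed by some `q ^ M` when `X` is finitely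
generated. Since `φ ≡ λ (mod q)`, `(φ - λ) ^ k` maps `A` into `q ^ k A`, so `φ_A - λ` is nilpotent
on `T(A)`; as `λ - μ` is a unit modulo `q ^ M`, `φ_A - μ = (λ - μ) + (φ_A - λ)` is an automorphism
of `T(A)`, and symmetrically `φ_C - λ` is one of `T(C)`.

`T(B) → T(C)` is onto: if `q ^ k c = 0` and `g b = c`, then `q ^ k b = f a` and
`(φ_B - λ) ^ k (q ^ k b) = f ((φ_A - λ) ^ k a) ∈ q ^ k f(A)`, so `(φ_C - λ) ^ k c` lifts to `T(B)`.
`T(A) → T(B)` has a retraction: `(φ_B - μ) ^ M` maps `T(B)` into `f(T(A))` because `φ_C - μ` is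
nilpotent on `T(C)`, and on `f(T(A))` it is the automorphism `(φ_A - μ) ^ M`. -/

open Function

theorem AddMonoid.End.sub_intCast_apply {G : Type*} [AddCommGroup G] (φ : AddMonoid.End G)
    (n : ℤ) (x : G) : (φ - n) x = φ x - n • x :=
  rfl

theorem AddMonoidHom.map_pow_sub_intCast_apply {G H : Type*} [AddCommGroup G] [AddCommGroup H]
    {h : G →+ H} {a : AddMonoid.End G} {b : AddMonoid.End H} (hab : ∀ x, b (h x) = h (a x))
    (n : ℤ) (k : ℕ) (x : G) :
    h (((a - (n : AddMonoid.End G)) ^ k) x) = ((b - (n : AddMonoid.End H)) ^ k) (h x) := by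
  have hsemi : Semiconj h ⇑(a - (n : AddMonoid.End G)) ⇑(b - (n : AddMonoid.End H)) := fun x => by
    rw [AddMonoid.End.sub_intCast_apply, AddMonoid.End.sub_intCast_apply, map_sub, map_zsmul, hab]
  simpa only [AddMonoid.End.coe_pow] using hsemi.iterate_right k x

theorem isUnit_intCast_of_isCoprime {R : Type*} [Ring R] {c n : ℤ} (h : IsCoprime c n)
    (hn : (n : R) = 0) : IsUnit (c : R) := by
  obtain ⟨a, b, hab⟩ := h
  have hac : ((a * c : ℤ) : R) = 1 := by simpa [hn] using congrArg (Int.cast : ℤ → R) hab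
  exact ⟨⟨c, a, by rwa [← Int.cast_mul, mul_comm], by rwa [← Int.cast_mul]⟩, rfl⟩

theorem Function.Exact.nonempty_addEquiv_prod_of_isUnit {M N P : Type*} [AddCommGroup M]
    [AddCommGroup N] [AddCommGroup P] {f : M →+ N} {g : N →+ P} (hfg : Exact f g)
    (hf : Injective f) (hg : Surjective g) {a : AddMonoid.End M} {u : AddMonoid.End N}
    (ha : IsUnit a) (hu : ∀ n, u n ∈ f.range) (hua : ∀ m, u (f m) = f (a m)) :
    Nonempty (N ≃+ M × P) := by
  let l : N →+ M := (↑ha.unit⁻¹ : AddMonoid.End M).comp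
    ((AddMonoidHom.ofInjective hf).symm.toAddMonoidHom.comp (u.codRestrict f.range hu))
  have hl : ∀ m, l (f m) = m := fun m => by
    have hfu : (AddMonoidHom.ofInjective hf).symm ⟨u (f m), hu (f m)⟩ = a m :=
      (AddEquiv.symm_apply_eq _).mpr (Subtype.ext (hua m))
    calc l (f m) = (↑ha.unit⁻¹ : AddMonoid.End M) (a m) := congrArg _ hfu
      _ = m := DFunLike.congr_fun ha.val_inv_mul m
  exact ⟨(hfg.splitInjectiveEquiv (f := f.toIntLinearMap) (g := g.toIntLinearMap) hg
    ⟨l.toIntLinearMap, LinearMap.ext hl⟩).1.toAddEquiv⟩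

namespace qPrimaryTorsion

variable {q : ℕ} {G H : Type*} [AddCommGroup G] [AddCommGroup H]

theorem map_mem (h : G →+ H) {x : G} (hx : x ∈ qPrimaryTorsion q G) :
    h x ∈ qPrimaryTorsion q H := by
  obtain ⟨k, hk⟩ := hx
  exact ⟨k, by rw [← map_nsmul, hk, map_zero]⟩

theorem mem_of_map_mem {h : G →+ H} (hh : Injective h) {x : G}
    (hx : h x ∈ qPrimaryTorsion q H) : x ∈ qPrimaryTorsion q G := by
  obtain ⟨k, hk⟩ := hx
  exact ⟨k, hh (by rw [map_nsmul, hk, map_zero])⟩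

theorem mem_of_pow_nsmul_mem {x : G} (j : ℕ) (hx : q ^ j • x ∈ qPrimaryTorsion q G) :
    x ∈ qPrimaryTorsion q G := by
  obtain ⟨k, hk⟩ := hx
  exact ⟨k + j, by rw [pow_add, mul_smul, hk]⟩

variable (q) in
theorem exists_pow_nsmul_eq_zero [AddGroup.FG G] :
    ∃ M : ℕ, ∀ x ∈ qPrimaryTorsion q G, q ^ M • x = 0 := by
  have : Module.Finite ℤ G := Module.Finite.iff_addGroup_fg.mpr ‹_›
  obtain ⟨M, hM⟩ : ∃ M, ∀ m, M ≤ m →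
      LinearMap.ker ((q : Module.End ℤ G) ^ M) = LinearMap.ker ((q : Module.End ℤ G) ^ m) :=
    monotone_stabilizes_iff_noetherian.mpr inferInstance (LinearMap.iterateKer _)
  refine ⟨M, fun x ⟨k, hk⟩ => ?_⟩
  have hx : x ∈ LinearMap.ker ((q : Module.End ℤ G) ^ max M k) := by
    rw [LinearMap.mem_ker, ← Nat.cast_pow, Module.End.natCast_apply,
      ← Nat.sub_add_cancel (le_max_right M k), pow_add, mul_smul, hk, smul_zero]
  rw [← hM _ (le_max_left M k)] at hx
  rwa [LinearMap.mem_ker, ← Nat.cast_pow, Module.End.natCast_apply] at hx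

variable (q) in
def map (h : G →+ H) : qPrimaryTorsion q G →+ qPrimaryTorsion q H :=
  (h.comp (qPrimaryTorsion q G).subtype).codRestrict _ fun x => map_mem h x.2

@[simp]
theorem coe_map_apply (h : G →+ H) (x : qPrimaryTorsion q G) : (map q h x : H) = h x := rfl

theorem map_injective {h : G →+ H} (hh : Injective h) : Injective (map q h) :=
  fun _ _ hxy => Subtype.ext (hh (congrArg Subtype.val hxy))

theorem exact_map {K : Type*} [AddCommGroup K] {f : G →+ H} {g : H →+ K} (hf : Injective f)
    (hfg : Exact f g) : Exact (map q f) (map q g) := fun y => by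
  refine ⟨fun hy => ?_, fun ⟨x, hx⟩ => hx ▸ Subtype.ext (hfg.apply_apply_eq_zero x)⟩
  obtain ⟨x, hx⟩ := (hfg y).mp (congrArg Subtype.val hy)
  exact ⟨⟨x, mem_of_map_mem hf (hx ▸ y.2)⟩, Subtype.ext hx⟩

variable (q) in
def restrictEnd : AddMonoid.End G →+* AddMonoid.End (qPrimaryTorsion q G) where
  toFun := map q
  map_one' := rfl
  map_mul' _ _ := rfl
  map_zero' := rfl
  map_add' _ _ := rfl

theorem exists_pow_sub_intCast_apply_eq {φ : AddMonoid.End G} {lam : ℤ}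
    (hφ : ∀ x, ∃ y, φ x - lam • x = (q : ℤ) • y) (k : ℕ) (x : G) :
    ∃ y, ((φ - lam) ^ k) x = q ^ k • y := by
  induction k generalizing x with
  | zero => exact ⟨x, by simp⟩
  | succ k ih =>
    obtain ⟨y, hy⟩ := hφ x
    obtain ⟨z, hz⟩ := ih y
    refine ⟨z, ?_⟩
    rw [pow_succ, AddMonoid.End.coe_mul, comp_apply, AddMonoid.End.sub_intCast_apply, hy,
      natCast_zsmul, map_nsmul, hz, ← mul_smul, pow_succ']

theorem pow_sub_intCast_apply_eq_zero {φ : AddMonoid.End G} {lam : ℤ}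
    (hφ : ∀ x, ∃ y, φ x - lam • x = (q : ℤ) • y) {M : ℕ}
    (hM : ∀ x ∈ qPrimaryTorsion q G, q ^ M • x = 0) {x : G} (hx : x ∈ qPrimaryTorsion q G) :
    ((φ - lam) ^ M) x = 0 := by
  obtain ⟨y, hy⟩ := exists_pow_sub_intCast_apply_eq hφ M x
  rw [hy, hM y (mem_of_pow_nsmul_mem M (hy ▸ map_mem _ hx))]

theorem isUnit_restrictEnd_sub_intCast [AddGroup.FG G] (hq : q.Prime) {φ : AddMonoid.End G}
    {lam mu : ℤ} (hφ : ∀ x, ∃ y, φ x - lam • x = (q : ℤ) • y) (hlm : ¬ (q : ℤ) ∣ lam - mu) :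
    IsUnit (restrictEnd q (φ - (mu : AddMonoid.End G))) := by
  obtain ⟨M, hM⟩ := exists_pow_nsmul_eq_zero (G := G) q
  have hnil : IsNilpotent (restrictEnd q (φ - (lam : AddMonoid.End G))) := ⟨M, by
    refine AddMonoidHom.ext fun x => Subtype.ext ?_
    rw [← map_pow]
    exact pow_sub_intCast_apply_eq_zero hφ hM x.2⟩
  have hunit : IsUnit ((lam - mu : ℤ) : AddMonoid.End (qPrimaryTorsion q G)) := by
    refine isUnit_intCast_of_isCoprime (n := (q : ℤ) ^ M) ?_ ?_
    · exact ((Prime.coprime_iff_not_dvd (Nat.prime_iff_prime_int.mp hq)).mpr hlm).symm.pow_right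
    · refine AddMonoidHom.ext fun x => Subtype.ext ?_
      show ((q : ℤ) ^ M) • (x : G) = 0
      rw [← Nat.cast_pow, natCast_zsmul, hM _ x.2]
  have hsplit : restrictEnd q (φ - (mu : AddMonoid.End G)) =
      ((lam - mu : ℤ) : _) + restrictEnd q (φ - (lam : AddMonoid.End G)) := by
    rw [map_sub, map_sub, map_intCast, map_intCast, Int.cast_sub]
    abel
  rw [hsplit]
  exact hnil.isUnit_add_left_of_commute hunit (Int.cast_commute _ _).symm

section Extension

variable {A B C : Type*} [AddCommGroup A] [AddCommGroup B] [AddCommGroup C]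
  {f : A →+ B} {g : B →+ C} {φA : AddMonoid.End A} {φB : AddMonoid.End B} {φC : AddMonoid.End C}
  {lam mu : ℤ}

theorem exists_mem_apply_eq_pow_sub_intCast_apply (hg : Surjective g) (hfg : Exact f g)
    (hcommf : ∀ a, φB (f a) = f (φA a)) (hcommg : ∀ b, φC (g b) = g (φB b))
    (hA : ∀ a, ∃ a', φA a - lam • a = (q : ℤ) • a') {k : ℕ} {c : C} (hc : q ^ k • c = 0) :
    ∃ b ∈ qPrimaryTorsion q B, g b = ((φC - lam) ^ k) c := by
  obtain ⟨b, rfl⟩ := hg c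
  obtain ⟨a, ha⟩ := (hfg (q ^ k • b)).mp (by rw [map_nsmul, hc])
  obtain ⟨a', ha'⟩ := exists_pow_sub_intCast_apply_eq hA k a
  refine ⟨((φB - lam) ^ k) b - f a', ⟨k, ?_⟩, ?_⟩
  · rw [nsmul_sub, ← map_nsmul, ← map_nsmul, ← ha,
      ← AddMonoidHom.map_pow_sub_intCast_apply hcommf, ha', sub_self]
  · rw [map_sub, hfg.apply_apply_eq_zero, sub_zero, AddMonoidHom.map_pow_sub_intCast_apply hcommg]

theorem map_surjective [AddGroup.FG C] (hq : q.Prime) (hg : Surjective g) (hfg : Exact f g)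
    (hcommf : ∀ a, φB (f a) = f (φA a)) (hcommg : ∀ b, φC (g b) = g (φB b))
    (hA : ∀ a, ∃ a', φA a - lam • a = (q : ℤ) • a') (hC : ∀ c, ∃ c', φC c - mu • c = (q : ℤ) • c')
    (hlm : ¬ (q : ℤ) ∣ lam - mu) : Surjective (map q g) := by
  obtain ⟨M, hM⟩ := exists_pow_nsmul_eq_zero (G := C) q
  have hunit := (isUnit_restrictEnd_sub_intCast hq hC (lam := mu) (mu := lam)
    (by rwa [← dvd_neg, neg_sub])).pow M
  obtain ⟨v, hv⟩ := hunit.exists_right_inv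
  intro c
  obtain ⟨b, hb, hgb⟩ := exists_mem_apply_eq_pow_sub_intCast_apply hg hfg hcommf hcommg hA
    (hM _ (v c).2)
  refine ⟨⟨b, hb⟩, Subtype.ext ?_⟩
  rw [coe_map_apply, hgb]
  rw [← map_pow] at hv
  exact congrArg Subtype.val (DFunLike.congr_fun hv c)

theorem pow_sub_intCast_apply_mem_range (hf : Injective f) (hfg : Exact f g)
    (hcommg : ∀ b, φC (g b) = g (φB b)) (hC : ∀ c, ∃ c', φC c - mu • c = (q : ℤ) • c') {M : ℕ}
    (hM : ∀ c ∈ qPrimaryTorsion q C, q ^ M • c = 0) (b : qPrimaryTorsion q B) :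
    restrictEnd q ((φB - (mu : AddMonoid.End B)) ^ M) b ∈ (map q f).range := by
  obtain ⟨a, ha⟩ := (hfg (((φB - mu) ^ M) b)).mp (by
    rw [AddMonoidHom.map_pow_sub_intCast_apply hcommg,
      pow_sub_intCast_apply_eq_zero hC hM (map_mem g b.2)])
  exact ⟨⟨a, mem_of_map_mem hf (ha ▸ map_mem _ b.2)⟩, Subtype.ext ha⟩

end Extension

end qPrimaryTorsion

theorem qtorsion_of_extension_splits_general (q : ℕ) (hq : q.Prime)
    (A B C : Type) [AddCommGroup A] [AddCommGroup B] [AddCommGroup C]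
    (hfgA : AddGroup.FG A) (hfgC : AddGroup.FG C)
    (f : A →+ B) (g : B →+ C)
    (hf : Function.Injective f) (hg : Function.Surjective g)
    (hexact : f.range = g.ker)
    (φA : A →+ A) (φB : B →+ B) (φC : C →+ C)
    (hcommf : ∀ a, φB (f a) = f (φA a)) (hcommg : ∀ b, φC (g b) = g (φB b))
    (lam mu : ℤ) (hlm : ¬ ((q : ℤ) ∣ (lam - mu)))
    (hA : ∀ a : A, ∃ a' : A, φA a - lam • a = (q : ℤ) • a')
    (hC : ∀ c : C, ∃ c' : C, φC c - mu • c = (q : ℤ) • c') :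
    Nonempty ((qPrimaryTorsion q B) ≃+ (qPrimaryTorsion q A × qPrimaryTorsion q C)) := by
  have hfg : Exact f g := AddMonoidHom.exact_iff.mpr hexact.symm
  obtain ⟨M, hM⟩ := qPrimaryTorsion.exists_pow_nsmul_eq_zero (G := C) q
  have hunit := (qPrimaryTorsion.isUnit_restrictEnd_sub_intCast hq hA hlm).pow M
  rw [← map_pow] at hunit
  exact (qPrimaryTorsion.exact_map hf hfg).nonempty_addEquiv_prod_of_isUnit
    (qPrimaryTorsion.map_injective hf)
    (qPrimaryTorsion.map_surjective hq hg hfg hcommf hcommg hA hC hlm) hunit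
    (qPrimaryTorsion.pow_sub_intCast_apply_mem_range hf hfg hcommg hC hM)
    (fun a => Subtype.ext (AddMonoidHom.map_pow_sub_intCast_apply hcommf mu M a).symm)

/-- Let `0 → A → B → C → 0` be a short exact sequence of finitely generated abelian groups
with compatible endomorphisms `φA, φB, φC`, and `q` a prime.  If `φA` acts as multiplication
by `lam` on `A ⊗ ℤ/q` and `φC` by `mu` on `C ⊗ ℤ/q` with `lam ≢ mu (mod q)`, then the
`q`-primary torsion of `B` is the direct sum of those of `A` and `C`. -/
theorem qtorsion_of_extension_splits (q : ℕ) (hq : q.Prime)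
    (A B C : Type) [AddCommGroup A] [AddCommGroup B] [AddCommGroup C]
    (hfgA : AddGroup.FG A) (hfgB : AddGroup.FG B) (hfgC : AddGroup.FG C)
    (f : A →+ B) (g : B →+ C)
    (hf : Function.Injective f) (hg : Function.Surjective g)
    (hexact : f.range = g.ker)
    (φA : A →+ A) (φB : B →+ B) (φC : C →+ C)
    (hcommf : ∀ a, φB (f a) = f (φA a)) (hcommg : ∀ b, φC (g b) = g (φB b))
    (lam mu : ℤ) (hlm : ¬ ((q : ℤ) ∣ (lam - mu)))
    (hA : ∀ a : A, ∃ a' : A, φA a - lam • a = (q : ℤ) • a')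
    (hC : ∀ c : C, ∃ c' : C, φC c - mu • c = (q : ℤ) • c') :
    Nonempty ((qPrimaryTorsion q B) ≃+ (qPrimaryTorsion q A × qPrimaryTorsion q C)) :=
  qtorsion_of_extension_splits_general q hq A B C hfgA hfgC f g hf hg hexact φA φB φC hcommf hcommg
    lam mu hlm hA hC
end

section
/- Let E be a first-quadrant-type homology spectral sequence of ℚ-vector spaces equipped with an endomorphism φ acting on each E^2_{k,l} by multiplication by p^{k/2 + l - n} (where all nonzero entries have k even), for some fixed integer p > 1. Then all differentials d_r for r ≥ 3 vanish, i.e. E^3 = E^∞. -/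
/-- Let `E` be a (homology) spectral sequence of `ℚ`-vector spaces, concentrated in even
columns `k`, with differentials `d_r : E^r_{k,l} → E^r_{k-r,l+r-1}`, equipped with an
endomorphism `φ` commuting with the differentials and acting on each `E^r_{k,l}` by
multiplication by `p^(k/2 + l - n)` for a fixed integer `p > 1`.  Then all differentials
`d_r` with `r ≥ 3` vanish, i.e. `E^3 = E^∞`. -/
theorem spectral_sequence_degenerates_at_E3 (n p : ℤ) (hp : 1 < p)
    (E : ℕ → ℤ → ℤ → Type*)
    [∀ r k l, AddCommGroup (E r k l)] [∀ r k l, Module ℚ (E r k l)]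
    (d : ∀ (r : ℕ) (k l : ℤ), E r k l →ₗ[ℚ] E r (k - r) (l + r - 1))
    (φ : ∀ (r : ℕ) (k l : ℤ), E r k l →ₗ[ℚ] E r k l)
    (hcomm : ∀ (r : ℕ) (k l : ℤ),
      (φ r (k - r) (l + r - 1)).comp (d r k l) = (d r k l).comp (φ r k l))
    (hodd : ∀ (r : ℕ) (k l : ℤ), ¬ Even k → Subsingleton (E r k l))
    (hscal : ∀ (r : ℕ) (k l : ℤ), Even k →
      ∀ v : E r k l, φ r k l v = ((p : ℚ) ^ (k / 2 + l - n) : ℚ) • v) :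
    ∀ (r : ℕ) (k l : ℤ), 3 ≤ r → d r k l = 0 := by
  intro r k l hr
  ext v
  simp only [LinearMap.zero_apply]
  by_cases hk : Even k
  · by_cases hkr : Even (k - (r : ℤ))
    · -- both even: eigenvalue argument
      have h1 : φ r (k - r) (l + r - 1) (d r k l v) = d r k l (φ r k l v) :=
        LinearMap.congr_fun (hcomm r k l) v
      rw [hscal r (k - r) (l + r - 1) hkr, hscal r k l hk, map_smul] at h1
      have hsub : ((p : ℚ) ^ ((k - r) / 2 + (l + r - 1) - n)
          - (p : ℚ) ^ (k / 2 + l - n)) • (d r k l v) = 0 := by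
        rw [sub_smul, h1, sub_self]
      have hp0 : (1 : ℚ) < (p : ℚ) := by exact_mod_cast hp
      have hne : ((p : ℚ) ^ ((k - r) / 2 + (l + r - 1) - n)
          - (p : ℚ) ^ (k / 2 + l - n)) ≠ 0 := by
        rw [sub_ne_zero]
        intro h
        have := zpow_right_injective₀ (by positivity) (ne_of_gt hp0) h
        -- exponents differ
        have hre : Even (r : ℤ) := by
          rcases hk with ⟨a, ha⟩
          rcases hkr with ⟨b, hb⟩
          exact ⟨a - b, by omega⟩
        rcases hre with ⟨s, hs⟩
        have hk2 : (k - r) / 2 = k / 2 - s := by omega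
        omega
      exact (smul_eq_zero.mp hsub).resolve_left hne
    · have := hodd r (k - r) (l + r - 1) (by simpa using hkr)
      exact Subsingleton.elim _ _
  · have := hodd r k l hk
    have : v = 0 := Subsingleton.elim _ _
    rw [this, map_zero]
end
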